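/- For every real v > 1/2 and every tie-breaking rule, let (μ, ν) be a mixed Nash equilibrium of the AND–OR game. If 0 < b < c are such that ν{p : p.1 ≤ b} = ν{p : p.1 ≤ c} (OR never bids in (b,c] on item 1), ν{p : p.1 ≤ b} > 0 and μ{p : p.1 ≤ b} > 0, then ν{p : p.1 ≤ b} = 1 and μ{p : p.1 ≤ b} = 1. The same statement holds with the roles of μ and ν interchanged, and with the first coordinate replaced by the second. -/

import Mathlib

open MeasureTheory Set
open scoped ENNReal

noncomputable section

/-- A bid profile for one player: a bid on each of the two items. -/
abbrev Bid := ℝ × ℝ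

/-- The maximum allowed bid `H = max 1 v`. -/
def Hval (v : ℝ) : ℝ := max 1 v

/-- The set of allowed bids `[0,H] × [0,H]`. -/
def box (v : ℝ) : Set Bid := Icc (0:ℝ) (Hval v) ×ˢ Icc (0:ℝ) (Hval v)

/-- A tie-breaking rule: measurable functions `t₁ t₂ : ℝ → [0,1]`, where `tᵢ x` is the
probability that AND wins item `i` when both players bid `x` on it. -/
structure TieRule where
  t1 : ℝ → ℝ
  t2 : ℝ → ℝ
  meas1 : Measurable t1
  meas2 : Measurable t2
  t1_nonneg : ∀ x, 0 ≤ t1 x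
  t1_le_one : ∀ x, t1 x ≤ 1
  t2_nonneg : ∀ x, 0 ≤ t2 x
  t2_le_one : ∀ x, t2 x ≤ 1

/-- Probability that AND wins item 1 with bids `a` (AND) and `b` (OR). -/
def q1 (T : TieRule) (a b : Bid) : ℝ :=
  if b.1 < a.1 then 1 else if a.1 = b.1 then T.t1 a.1 else 0

/-- Probability that AND wins item 2 with bids `a` (AND) and `b` (OR). -/
def q2 (T : TieRule) (a b : Bid) : ℝ :=
  if b.2 < a.2 then 1 else if a.2 = b.2 then T.t2 a.2 else 0

/-- Expected utility of the AND player at the pure profile `(a,b)`. -/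
def uAnd (T : TieRule) (a b : Bid) : ℝ :=
  q1 T a b * q2 T a b - a.1 * q1 T a b - a.2 * q2 T a b

/-- Expected utility of the OR player at the pure profile `(a,b)`. -/
def uOr (v : ℝ) (T : TieRule) (a b : Bid) : ℝ :=
  v * (1 - q1 T a b * q2 T a b) - b.1 * (1 - q1 T a b) - b.2 * (1 - q2 T a b)

/-- A mixed strategy: a Borel probability measure on `ℝ × ℝ` supported in the box. -/
def IsMixed (v : ℝ) (μ : Measure Bid) : Prop :=
  IsProbabilityMeasure μ ∧ μ (box v) = 1

/-- Expected utility of AND under mixed strategies. -/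
def UAnd (T : TieRule) (μ ν : Measure Bid) : ℝ :=
  ∫ p, uAnd T p.1 p.2 ∂(μ.prod ν)

/-- Expected utility of OR under mixed strategies. -/
def UOr (v : ℝ) (T : TieRule) (μ ν : Measure Bid) : ℝ :=
  ∫ p, uOr v T p.1 p.2 ∂(μ.prod ν)

/-- `(μ,ν)` is a mixed Nash equilibrium of the AND–OR game. -/
def IsNash (v : ℝ) (T : TieRule) (μ ν : Measure Bid) : Prop :=
  IsMixed v μ ∧ IsMixed v ν ∧
  (∀ a ∈ box v, (∫ b, uAnd T a b ∂ν) ≤ UAnd T μ ν) ∧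
  (∀ b ∈ box v, (∫ a, uOr v T a b ∂μ) ≤ UOr v T μ ν)

/-- The uniform probability measure on `[0,1] ⊆ ℝ`. -/
def P01 : Measure ℝ := volume.restrict (Icc (0:ℝ) 1)

/-- The OR equilibrium strategy `ν*`: bid `(x,0)` or `(0,x)` with probability `1/2` each,
where `x ∈ [0,1/2]` has CDF `x/(1-x)`. -/
def nuStar : Measure Bid :=
  (1/2 : ℝ≥0∞) • Measure.map (fun u => (u/(1+u), (0:ℝ))) P01 +
  (1/2 : ℝ≥0∞) • Measure.map (fun u => ((0:ℝ), u/(1+u))) P01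

/-- Inverse-CDF map for the AND equilibrium bid distribution. -/
def gAnd (v u : ℝ) : ℝ := if 0 < u then max 0 (v - (v - 1/2)/u) else 0

/-- The AND equilibrium strategy `μ*`: bid `(y,y)` where `y ∈ [0,1/2]` has CDF
`(v-1/2)/(v-y)`, with an atom of mass `1 - 1/(2v)` at `0`. -/
def muStar (v : ℝ) : Measure Bid := Measure.map (fun u => (gAnd v u, gAnd v u)) P01

/-!
Fix an item `i`. Given a player's bid on the other item, her expected payoff as a function of
her bid `x` on item `i` is, up to a constant, the payoff `∫ winProb (τ x) x (s p) * (g p - x) dκ`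
of a first-price auction against the opponent's bid `s p`, where winning is worth `g p ∈ [0, V]`;
AND wins ties with probability `τ = tᵢ`, OR with `τ = 1 - tᵢ`. In an equilibrium almost every
bid is optimal in this auction.

Suppose one player never bids in `(b, c]` but does not always bid at most `b`, and let `d ≥ c`
be the first point above `b` where she puts mass. A bid in `(b, d)` could be lowered to just
above `b` at no loss, so the opponent puts no mass in `(b, d)` either. The first player bids
arbitrarily close above `d`, which only pays if the opponent has an atom at `d`. A player with an
atom at `d` must win all ties there: lowering such a bid to just above `b` does not pay, so ties
at `d` are worth something to her, and otherwise raising the bid slightly would pay. The same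
comparison shows that the other player has an atom at `d` too, so both players win all ties at
`d`, which is absurd. Finally, once one player bids at most `b` almost surely, the gap `(b, ∞)`
forces the same for the other.
-/

open Filter Topology

section General

variable {α β : Type*} [MeasurableSpace α] [MeasurableSpace β]

def winProb (t x y : ℝ) : ℝ := if y < x then 1 else if x = y then t else 0

lemma winProb_of_lt {t x y : ℝ} (h : y < x) : winProb t x y = 1 := if_pos h

lemma winProb_of_gt {t x y : ℝ} (h : x < y) : winProb t x y = 0 := by
  rw [winProb, if_neg h.not_gt, if_neg h.ne]

lemma winProb_self (t x : ℝ) : winProb t x x = t := by simp [winProb]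

lemma winProb_mem_Icc {t : ℝ} (ht : t ∈ Icc 0 1) (x y : ℝ) : winProb t x y ∈ Icc 0 1 := by
  unfold winProb; split_ifs <;> simp [ht]

lemma measurable_winProb (t x : ℝ) : Measurable (winProb t x) := by
  refine Measurable.ite measurableSet_Iio measurable_const (Measurable.ite ?_ measurable_const
    measurable_const)
  exact measurableSet_eq_fun measurable_const measurable_id

lemma one_sub_winProb (τ : ℝ → ℝ) (x y : ℝ) : 1 - winProb (τ x) x y = winProb (1 - τ y) y x := by
  rcases lt_trichotomy x y with h | rfl | h
  · rw [winProb_of_gt h, winProb_of_lt h, sub_zero]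
  · rw [winProb_self, winProb_self]
  · rw [winProb_of_lt h, winProb_of_gt h, sub_self]

lemma tendsto_measureReal_preimage_Icc (κ : Measure α) [IsFiniteMeasure κ] {s : α → ℝ}
    (hs : Measurable s) (d : ℝ) :
    Tendsto (fun x => κ.real (s ⁻¹' Icc d x)) (𝓝[>] d) (𝓝 (κ.real (s ⁻¹' {d}))) := by
  have hlim := tendsto_measure_biInter_gt (μ := κ) (s := fun x => s ⁻¹' Icc d x)
    (fun _ _ => (hs measurableSet_Icc).nullMeasurableSet)
    (fun _ _ _ hij => preimage_mono (Icc_subset_Icc_right hij))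
    ⟨d + 1, by linarith, measure_ne_top _ _⟩
  have hinter : ⋂ x > d, s ⁻¹' Icc d x = s ⁻¹' {d} := by
    ext p
    simp only [mem_iInter, mem_preimage, mem_Icc, mem_singleton_iff]
    refine ⟨fun h => le_antisymm (le_of_forall_gt_imp_ge_of_dense fun x hx => (h x hx).2) ?_,
      fun h x hx => ⟨h.ge, h.le.trans hx.le⟩⟩
    simpa using (h (d + 1) (by linarith)).1
  rw [hinter] at hlim
  exact (ENNReal.tendsto_toReal (measure_ne_top _ _)).comp hlim

lemma tendsto_measureReal_preimage_Ioc (κ : Measure α) [IsFiniteMeasure κ] {s : α → ℝ}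
    (hs : Measurable s) (d : ℝ) :
    Tendsto (fun x => κ.real (s ⁻¹' Ioc d x)) (𝓝[>] d) (𝓝 0) := by
  have hlim := tendsto_measure_biInter_gt (μ := κ) (s := fun x => s ⁻¹' Ioc d x)
    (fun _ _ => (hs measurableSet_Ioc).nullMeasurableSet)
    (fun _ _ _ hij => preimage_mono (Ioc_subset_Ioc_right hij))
    ⟨d + 1, by linarith, measure_ne_top _ _⟩
  have hinter : ⋂ x > d, s ⁻¹' Ioc d x = ∅ := by
    refine eq_empty_of_forall_notMem fun p hp => ?_
    simp only [mem_iInter, mem_preimage, mem_Ioc] at hp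
    have hdp := (hp (d + 1) (by linarith)).1
    linarith [(hp ((d + s p) / 2) (by linarith)).2]
  rw [hinter, measure_empty] at hlim
  rw [← ENNReal.toReal_zero]
  exact (ENNReal.tendsto_toReal ENNReal.zero_ne_top).comp hlim

lemma exists_measure_Ioo_eq_zero_of_Iic_eq (ρ : Measure ℝ) [IsFiniteMeasure ρ] {b c : ℝ}
    (hgap : ρ (Iic b) = ρ (Iic c)) (hlt : ρ (Iic b) < ρ univ) :
    ∃ d, c ≤ d ∧ ρ (Ioo b d) = 0 ∧ ∀ x > d, 0 < ρ (Icc d x) := by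
  set S := {x | ρ (Iic b) < ρ (Iic x)}
  have hSne : S.Nonempty := ((tendsto_measure_Iic_atTop ρ).eventually (lt_mem_nhds hlt)).exists
  have hcS : c ∈ lowerBounds S := fun x (hx : ρ (Iic b) < ρ (Iic x)) =>
    le_of_not_gt fun hxc => hx.not_ge (hgap ▸ measure_mono (Iic_subset_Iic.2 hxc.le))
  have hflat : ∀ y < sInf S, ρ (Ioc b y) = 0 := by
    intro y hy
    rcases le_or_gt y b with hyb | hby
    · rw [Ioc_eq_empty hyb.not_gt, measure_empty]
    · have hyS : ¬ ρ (Iic b) < ρ (Iic y) := fun h => (csInf_le ⟨c, hcS⟩ h).not_gt hy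
      refine nonpos_iff_eq_zero.1 (ENNReal.le_of_add_le_add_left (measure_ne_top ρ (Iic b)) ?_)
      rwa [add_zero, ← measure_union (Iic_disjoint_Ioc le_rfl) measurableSet_Ioc,
        Iic_union_Ioc_eq_Iic hby.le, ← not_lt]
  have hnull : ρ (Ioo b (sInf S)) = 0 := by
    refine measure_mono_null (t := ⋃ q : {q : ℚ // (q : ℝ) < sInf S}, Ioc b (q : ℝ))
      (fun x hx => ?_) (measure_iUnion_null fun q => hflat q q.2)
    obtain ⟨q, hxq, hqd⟩ := exists_rat_btwn hx.2
    exact mem_iUnion.2 ⟨⟨q, hqd⟩, hx.1, hxq.le⟩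
  refine ⟨sInf S, le_csInf hSne hcS, hnull, fun x hx => pos_iff_ne_zero.2 fun hx0 => ?_⟩
  obtain ⟨y, hyS, hyx⟩ := (csInf_lt_iff ⟨c, hcS⟩ hSne).1 hx
  have hcover : Iic y ⊆ Iic b ∪ Ioo b (sInf S) ∪ Icc (sInf S) x := fun z (hz : z ≤ y) => by
    rcases le_or_gt z b with hzb | hbz
    · exact Or.inl (Or.inl hzb)
    rcases lt_or_ge z (sInf S) with hzd | hdz
    · exact Or.inl (Or.inr ⟨hbz, hzd⟩)
    · exact Or.inr ⟨hdz, hz.trans hyx.le⟩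
  refine (hyS : ρ (Iic b) < ρ (Iic y)).not_ge ((measure_mono hcover).trans ?_)
  calc _ ≤ ρ (Iic b ∪ Ioo b (sInf S)) + ρ (Icc (sInf S) x) := measure_union_le _ _
    _ ≤ ρ (Iic b) + ρ (Ioo b (sInf S)) + ρ (Icc (sInf S) x) := by gcongr; exact measure_union_le _ _
    _ = ρ (Iic b) := by rw [hnull, hx0, add_zero, add_zero]

lemma integrable_of_mem_Icc {m : Measure β} [IsFiniteMeasure m]
    {f : β → ℝ} {a b : ℝ} (hf : Measurable f) (h : ∀ x, f x ∈ Icc a b) : Integrable f m :=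
  .of_bound hf.aestronglyMeasurable (max |a| |b|)
    (ae_of_all _ fun x => abs_le_max_abs_abs (h x).1 (h x).2)

lemma ae_isMaxOn_of_forall_le_integral {m : Measure β}
    [IsProbabilityMeasure m] {F : β → ℝ} {S : Set β} (hF : Integrable F m)
    (hS : ∀ᵐ x ∂m, x ∈ S) (hle : ∀ x ∈ S, F x ≤ ∫ y, F y ∂m) :
    ∀ᵐ x ∂m, x ∈ S ∧ IsMaxOn F S x := by
  have heq : F =ᵐ[m] fun _ => ∫ y, F y ∂m :=
    (integral_eq_iff_of_ae_le hF (integrable_const _) (hS.mono hle)).1 (by simp)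
  filter_upwards [hS, heq] with x hx hFx
  exact ⟨hx, fun y hy => (hle y hy).trans hFx.ge⟩

lemma IsMaxOn.of_comp_eq_add {γ : Type*} {F : γ → ℝ} {S : Set γ} {x : γ} {e : ℝ → γ}
    {Φ : ℝ → ℝ} {I : Set ℝ} {y₀ c : ℝ} (hF : IsMaxOn F S x) (he : MapsTo e I S) (hx : e y₀ = x)
    (hΦ : ∀ y, F (e y) = Φ y + c) : IsMaxOn Φ I y₀ :=
  isMaxOn_iff.2 fun y hy => by
    have := isMaxOn_iff.1 (hF.comp_mapsTo he hx) y hy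
    simp only [Function.comp_apply, hΦ] at this
    linarith

/-- Expected payoff of bidding `x` on an item worth `g p` against an opponent `p ∼ κ` who bids
`s p`, ties being won with probability `τ x`. -/
def auctionPayoff (κ : Measure α) (s : α → ℝ) (τ : ℝ → ℝ) (g : α → ℝ) (x : ℝ) : ℝ :=
  ∫ p, winProb (τ x) x (s p) * (g p - x) ∂κ

structure IsAuction (s : α → ℝ) (τ : ℝ → ℝ) (g : α → ℝ) (V : ℝ) : Prop where
  measurable_bid : Measurable s
  measurable_value : Measurable g
  value_mem : ∀ p, g p ∈ Icc 0 V
  tie_mem : ∀ x, τ x ∈ Icc 0 1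

namespace IsAuction

variable {κ : Measure α} [IsFiniteMeasure κ] {s : α → ℝ} {τ : ℝ → ℝ} {g : α → ℝ} {V : ℝ}

lemma integrable_value (hA : IsAuction s τ g V) : Integrable g κ :=
  integrable_of_mem_Icc hA.measurable_value hA.value_mem

lemma integrable (hA : IsAuction s τ g V) (x : ℝ) :
    Integrable (fun p => winProb (τ x) x (s p) * (g p - x)) κ :=
  (hA.integrable_value.sub (integrable_const x)).bdd_mul
    ((measurable_winProb _ x).comp hA.measurable_bid).aestronglyMeasurable
    (ae_of_all _ fun p => by
      obtain ⟨hw0, hw1⟩ := winProb_mem_Icc (hA.tie_mem x) x (s p)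
      rwa [Real.norm_of_nonneg hw0])

lemma integral_eq_auctionPayoff_add {y : ℝ} {u c : α → ℝ} (hA : IsAuction s τ g V)
    (hu : ∀ p, u p = winProb (τ y) y (s p) * (g p - y) + c p) (hc : Integrable c κ) :
    ∫ p, u p ∂κ = auctionPayoff κ s τ g y + ∫ p, c p ∂κ := by
  simp_rw [hu]
  exact integral_add (hA.integrable y) hc

lemma auctionPayoff_sub_of_gap (hA : IsAuction s τ g V) {b d e x : ℝ}
    (hgap : κ (s ⁻¹' Ioo b d) = 0) (he : e ∈ Ioo b d) (hdx : d ≤ x) :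
    auctionPayoff κ s τ g e - auctionPayoff κ s τ g x
      = (x - e) * κ.real (s ⁻¹' Iic b)
        - ∫ p in s ⁻¹' Icc d x, winProb (τ x) x (s p) * (g p - x) ∂κ := by
  have hpt : (fun p => winProb (τ e) e (s p) * (g p - e) - winProb (τ x) x (s p) * (g p - x))
      =ᵐ[κ] fun p => (s ⁻¹' Iic b).indicator (fun _ => x - e) p
        - (s ⁻¹' Icc d x).indicator (fun p => winProb (τ x) x (s p) * (g p - x)) p := by
    filter_upwards [measure_eq_zero_iff_ae_notMem.1 hgap] with p hp
    simp only [indicator, mem_preimage, mem_Iic, mem_Icc, mem_Ioo] at hp ⊢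
    rcases le_or_gt (s p) b with hpb | hbp
    · rw [winProb_of_lt (hpb.trans_lt he.1), winProb_of_lt (by linarith [he.1, he.2]), if_pos hpb,
        if_neg (by intro h; linarith [h.1, he.1, he.2])]
      ring
    · have hdp : d ≤ s p := not_lt.1 fun h => hp ⟨hbp, h⟩
      rw [winProb_of_gt (he.2.trans_le hdp), if_neg hbp.not_ge]
      split_ifs with h
      · ring
      · rw [winProb_of_gt (not_le.1 fun hpx => h ⟨hdp, hpx⟩)]; ring
  unfold auctionPayoff
  rw [← integral_sub (hA.integrable e) (hA.integrable x), integral_congr_ae hpt,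
    integral_sub ((integrable_const _).indicator (hA.measurable_bid measurableSet_Iic))
      ((hA.integrable x).indicator (hA.measurable_bid measurableSet_Icc)),
    integral_indicator_const _ (hA.measurable_bid measurableSet_Iic),
    integral_indicator (hA.measurable_bid measurableSet_Icc), smul_eq_mul, mul_comm]

lemma le_auctionPayoff_of_lt (hA : IsAuction s τ g V) {d x : ℝ} (hd : 0 ≤ d) (hdx : d < x) :
    auctionPayoff κ s τ g d + (1 - τ d) * ∫ p in s ⁻¹' {d}, (g p - d) ∂κ
      - (x - d) * κ.real univ - x * κ.real (s ⁻¹' Ioc d x) ≤ auctionPayoff κ s τ g x := by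
  have hψ : ∀ p, (s ⁻¹' {d}).indicator (fun p => (1 - τ d) * (g p - d)) p - (x - d)
      - (s ⁻¹' Ioc d x).indicator (fun _ => x) p
      ≤ winProb (τ x) x (s p) * (g p - x) - winProb (τ d) d (s p) * (g p - d) := by
    intro p
    simp only [indicator, mem_preimage, mem_singleton_iff, mem_Ioc]
    obtain ⟨hg0, -⟩ := hA.value_mem p
    rcases lt_trichotomy (s p) d with hpd | hpd | hpd
    · rw [winProb_of_lt hpd, winProb_of_lt (hpd.trans hdx), if_neg hpd.ne,
        if_neg fun h => (h.1.trans hpd).false]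
      linarith
    · rw [hpd, winProb_self, winProb_of_lt hdx, if_pos rfl, if_neg fun h => h.1.false]
      linarith
    · obtain ⟨hw0, hw1⟩ := winProb_mem_Icc (hA.tie_mem x) x (s p)
      rw [winProb_of_gt hpd, if_neg hpd.ne']
      split_ifs with hpx
      · nlinarith
      · rw [winProb_of_gt (not_le.1 fun h => hpx ⟨hpd, h⟩)]
        linarith
  have hint₁ : Integrable (fun p => (1 - τ d) * (g p - d)) κ :=
    (hA.integrable_value.sub (integrable_const d)).const_mul _
  have hmeas₁ := hA.measurable_bid (measurableSet_singleton d)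
  have hmeas₂ := hA.measurable_bid (measurableSet_Ioc (a := d) (b := x))
  have hint₂ : Integrable (fun p => (s ⁻¹' {d}).indicator (fun p => (1 - τ d) * (g p - d)) p
      - (x - d)) κ := (hint₁.indicator hmeas₁).sub (integrable_const _)
  have hmono := integral_mono (hint₂.sub ((integrable_const x).indicator hmeas₂))
    ((hA.integrable x).sub (hA.integrable d)) hψ
  simp only [Pi.sub_apply] at hmono
  rw [integral_sub hint₂ ((integrable_const x).indicator hmeas₂), integral_sub
      (hint₁.indicator hmeas₁) (integrable_const _), integral_indicator hmeas₁, integral_const_mul,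
    integral_const, integral_indicator_const _ hmeas₂,
    integral_sub (hA.integrable x) (hA.integrable d)] at hmono
  unfold auctionPayoff
  simp only [smul_eq_mul] at hmono
  linarith

variable {H b d : ℝ}

lemma mul_measureReal_Iic_le_of_isMaxOn (hA : IsAuction s τ g V) {e x : ℝ}
    (hmax : IsMaxOn (auctionPayoff κ s τ g) (Icc 0 H) x) (hxH : x ≤ H) (hb : 0 ≤ b)
    (he : e ∈ Ioo b d) (hdx : d ≤ x) (hgap : κ (s ⁻¹' Ioo b d) = 0) :
    (d - e) * κ.real (s ⁻¹' Iic b) ≤ V * κ.real (s ⁻¹' Icc d x) := by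
  have hopt := isMaxOn_iff.1 hmax e ⟨hb.trans he.1.le, by linarith [he.2]⟩
  have hsub := hA.auctionPayoff_sub_of_gap hgap he hdx
  have hbound : ∫ p in s ⁻¹' Icc d x, winProb (τ x) x (s p) * (g p - x) ∂κ
      ≤ V * κ.real (s ⁻¹' Icc d x) := by
    calc _ ≤ ∫ _ in s ⁻¹' Icc d x, V ∂κ := by
          refine setIntegral_mono (hA.integrable x).integrableOn (integrable_const V).integrableOn
            fun p => ?_
          obtain ⟨hw0, hw1⟩ := winProb_mem_Icc (hA.tie_mem x) x (s p)
          obtain ⟨hg0, hgV⟩ := hA.value_mem p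
          nlinarith [he.1, he.2]
      _ = V * κ.real (s ⁻¹' Icc d x) := by rw [setIntegral_const, smul_eq_mul, mul_comm]
  nlinarith [measureReal_nonneg (μ := κ) (s := s ⁻¹' Iic b)]

lemma notMem_Ioo_of_isMaxOn (hA : IsAuction s τ g V) {x : ℝ}
    (hmax : IsMaxOn (auctionPayoff κ s τ g) (Icc 0 H) x) (hx : x ∈ Icc 0 H) (hb : 0 ≤ b)
    (hgap : κ (s ⁻¹' Ioo b d) = 0) (hpos : 0 < κ (s ⁻¹' Iic b)) : x ∉ Ioo b d := by
  intro hxd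
  have hle := hA.mul_measureReal_Iic_le_of_isMaxOn hmax hx.2 hb (e := (b + x) / 2)
    ⟨by linarith [hxd.1], by linarith [hxd.1]⟩ le_rfl
    (measure_mono_null (preimage_mono (Ioo_subset_Ioo_right hxd.2.le)) hgap)
  rw [Icc_self, (measureReal_eq_zero_iff).2
    (measure_mono_null (preimage_mono (singleton_subset_iff.2 hxd)) hgap), mul_zero] at hle
  have hκb : 0 < κ.real (s ⁻¹' Iic b) := ENNReal.toReal_pos hpos.ne' (measure_ne_top κ _)
  nlinarith [hxd.1]

lemma tie_mul_integral_pos_of_isMaxOn (hA : IsAuction s τ g V)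
    (hmax : IsMaxOn (auctionPayoff κ s τ g) (Icc 0 H) d) (hdH : d ≤ H) (hb : 0 ≤ b)
    (hbd : b < d) (hgap : κ (s ⁻¹' Ioo b d) = 0) (hpos : 0 < κ (s ⁻¹' Iic b)) :
    0 < τ d * ∫ p in s ⁻¹' {d}, (g p - d) ∂κ := by
  have he : (b + d) / 2 ∈ Ioo b d := ⟨by linarith, by linarith⟩
  have hopt := isMaxOn_iff.1 hmax ((b + d) / 2) ⟨by linarith, by linarith⟩
  have hsub := hA.auctionPayoff_sub_of_gap hgap he le_rfl
  have htie : ∫ p in s ⁻¹' Icc d d, winProb (τ d) d (s p) * (g p - d) ∂κ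
      = τ d * ∫ p in s ⁻¹' {d}, (g p - d) ∂κ := by
    rw [Icc_self, ← integral_const_mul]
    exact setIntegral_congr_fun (hA.measurable_bid (measurableSet_singleton d))
      fun p (hp : s p = d) => by rw [hp, winProb_self]
  have hκb : 0 < κ.real (s ⁻¹' Iic b) := ENNReal.toReal_pos hpos.ne' (measure_ne_top κ _)
  nlinarith

lemma one_sub_tie_mul_integral_nonpos_of_isMaxOn (hA : IsAuction s τ g V)
    (hmax : IsMaxOn (auctionPayoff κ s τ g) (Icc 0 H) d) (hd : 0 ≤ d) (hdH : d < H) :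
    (1 - τ d) * ∫ p in s ⁻¹' {d}, (g p - d) ∂κ ≤ 0 := by
  have hle : ∀ᶠ x in 𝓝[>] d, (1 - τ d) * ∫ p in s ⁻¹' {d}, (g p - d) ∂κ
      ≤ (x - d) * κ.real univ + x * κ.real (s ⁻¹' Ioc d x) := by
    filter_upwards [Ioo_mem_nhdsGT hdH] with x hx
    have hup := hA.le_auctionPayoff_of_lt (κ := κ) hd hx.1
    have hopt := isMaxOn_iff.1 hmax x ⟨by linarith [hx.1], hx.2.le⟩
    linarith
  have hlim : Tendsto (fun x => (x - d) * κ.real univ + x * κ.real (s ⁻¹' Ioc d x))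
      (𝓝[>] d) (𝓝 0) := by
    have hid : Tendsto (fun x : ℝ => x) (𝓝[>] d) (𝓝 d) := nhdsWithin_le_nhds
    simpa using ((hid.sub_const d).mul_const (κ.real univ)).add
      (hid.mul (tendsto_measureReal_preimage_Ioc κ hA.measurable_bid d))
  exact ge_of_tendsto hlim hle

lemma tie_eq_one_of_isMaxOn (hA : IsAuction s τ g V)
    (hmax : IsMaxOn (auctionPayoff κ s τ g) (Icc 0 H) d) (hdH : d ≤ H) (hVH : V ≤ H)
    (hb : 0 ≤ b) (hbd : b < d) (hgap : κ (s ⁻¹' Ioo b d) = 0) (hpos : 0 < κ (s ⁻¹' Iic b)) :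
    τ d = 1 ∧ 0 < κ (s ⁻¹' {d}) := by
  obtain ⟨hτ0, hτ1⟩ := hA.tie_mem d
  have hJ := pos_of_mul_pos_right (hA.tie_mul_integral_pos_of_isMaxOn hmax hdH hb hbd hgap hpos) hτ0
  have hJle : ∫ p in s ⁻¹' {d}, (g p - d) ∂κ ≤ (V - d) * κ.real (s ⁻¹' {d}) := by
    calc _ ≤ ∫ _ in s ⁻¹' {d}, (V - d) ∂κ :=
          setIntegral_mono (hA.integrable_value.sub (integrable_const d)).integrableOn
            (integrable_const _).integrableOn fun p => sub_le_sub_right (hA.value_mem p).2 d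
      _ = (V - d) * κ.real (s ⁻¹' {d}) := by rw [setIntegral_const, smul_eq_mul, mul_comm]
  obtain ⟨hdV, hκd⟩ | ⟨-, hκd⟩ := pos_and_pos_or_neg_and_neg_of_mul_pos (hJ.trans_le hJle)
  · have hup := hA.one_sub_tie_mul_integral_nonpos_of_isMaxOn hmax (hb.trans hbd.le)
      (by linarith)
    exact ⟨le_antisymm hτ1 (by nlinarith), ENNReal.toReal_pos_iff.1 hκd |>.1⟩
  · exact absurd hκd measureReal_nonneg.not_gt

end IsAuction

/-- `m`-almost every player `x` bids `r x ∈ [0, H]` on an item optimally against an opponent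
`p ∼ κ` bidding `s p`, winning the item against `p` being worth `g x p` to `x`. -/
structure IsItemBestResponse (m : Measure β) (r : β → ℝ) (κ : Measure α) (s : α → ℝ)
    (τ : ℝ → ℝ) (g : β → α → ℝ) (V H : ℝ) : Prop where
  isAuction : ∀ x, IsAuction s τ (g x) V
  le_max : V ≤ H
  ae_isMaxOn : ∀ᵐ x ∂m, r x ∈ Icc 0 H ∧ IsMaxOn (auctionPayoff κ s τ (g x)) (Icc 0 H) (r x)

namespace IsItemBestResponse

variable {m : Measure β} {r : β → ℝ} {κ : Measure α} {s : α → ℝ}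
  {τ : ℝ → ℝ} {g : β → α → ℝ} {V H b d : ℝ}

lemma measure_preimage_Ioo_eq_zero [IsFiniteMeasure κ] (hP : IsItemBestResponse m r κ s τ g V H)
    (hb : 0 ≤ b) (hgap : κ (s ⁻¹' Ioo b d) = 0) (hpos : 0 < κ (s ⁻¹' Iic b)) : m (r ⁻¹' Ioo b d) = 0 :=
  measure_eq_zero_iff_ae_notMem.2 <| by
    filter_upwards [hP.ae_isMaxOn] with x ⟨hx, hmax⟩
    exact (hP.isAuction x).notMem_Ioo_of_isMaxOn hmax hx hb hgap hpos

lemma measure_preimage_Iic_eq_one [IsProbabilityMeasure m] [IsProbabilityMeasure κ]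
    (hP : IsItemBestResponse m r κ s τ g V H) (hb : 0 ≤ b) (hκ : κ (s ⁻¹' Iic b) = 1) :
    m (r ⁻¹' Iic b) = 1 := by
  have hle : m (r ⁻¹' Iic b)ᶜ = 0 := measure_eq_zero_iff_ae_notMem.2 <| by
    filter_upwards [hP.ae_isMaxOn] with x ⟨hx, hmax⟩
    have hgap : κ (s ⁻¹' Ioo b (H + 1)) = 0 := measure_mono_null (fun p hp => not_le.2 hp.1)
      ((prob_compl_eq_zero_iff ((hP.isAuction x).measurable_bid measurableSet_Iic)).2 hκ)
    have := (hP.isAuction x).notMem_Ioo_of_isMaxOn hmax hx hb hgap (hκ ▸ one_pos)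
    exact not_not.2 (not_lt.1 fun hbx => this ⟨hbx, by linarith [hx.2]⟩)
  rw [measure_congr (ae_eq_univ.2 hle), measure_univ]

lemma measure_preimage_singleton_pos [IsFiniteMeasure κ]
    (hP : IsItemBestResponse m r κ s τ g V H) (hb : 0 ≤ b) (hbd : b < d) (hgap : κ (s ⁻¹' Ioo b d) = 0) (hpos : 0 < κ (s ⁻¹' Iic b))
    (hnear : ∀ x > d, 0 < m (r ⁻¹' Icc d x)) : 0 < κ (s ⁻¹' {d}) := by
  obtain ⟨p, -⟩ := nonempty_of_measure_ne_zero hpos.ne'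
  obtain ⟨x₀, -⟩ := Measure.exists_mem_of_measure_ne_zero_of_ae
    (hnear (d + 1) (by linarith)).ne' (ae_restrict_of_ae hP.ae_isMaxOn)
  have hV : 0 ≤ V := ((hP.isAuction x₀).value_mem p).1.trans ((hP.isAuction x₀).value_mem p).2
  have hbound : ∀ x > d,
      (d - (b + d) / 2) * κ.real (s ⁻¹' Iic b) ≤ V * κ.real (s ⁻¹' Icc d x) := by
    intro x hx
    obtain ⟨y, hyx, hy, hmax⟩ :=
      Measure.exists_mem_of_measure_ne_zero_of_ae (hnear x hx).ne' (ae_restrict_of_ae hP.ae_isMaxOn)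
    calc _ ≤ V * κ.real (s ⁻¹' Icc d (r y)) :=
          (hP.isAuction y).mul_measureReal_Iic_le_of_isMaxOn hmax hy.2 hb
            ⟨by linarith, by linarith⟩ hyx.1 hgap
      _ ≤ V * κ.real (s ⁻¹' Icc d x) :=
          mul_le_mul_of_nonneg_left
            (measureReal_mono (preimage_mono (Icc_subset_Icc_right hyx.2))) hV
  have hlim := ge_of_tendsto
    ((tendsto_measureReal_preimage_Icc κ (hP.isAuction x₀).measurable_bid d).const_mul V)
    (eventually_nhdsWithin_of_forall hbound)
  refine pos_iff_ne_zero.2 fun h0 => ?_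
  rw [(measureReal_eq_zero_iff).2 h0, mul_zero] at hlim
  have hκb : 0 < κ.real (s ⁻¹' Iic b) := ENNReal.toReal_pos hpos.ne' (measure_ne_top κ _)
  nlinarith

lemma tie_eq_one [IsFiniteMeasure κ] (hP : IsItemBestResponse m r κ s τ g V H) (hb : 0 ≤ b)
    (hbd : b < d) (hgap : κ (s ⁻¹' Ioo b d) = 0) (hpos : 0 < κ (s ⁻¹' Iic b)) (hatom : 0 < m (r ⁻¹' {d})) :
    τ d = 1 ∧ 0 < κ (s ⁻¹' {d}) := by
  obtain ⟨x, hxd, hx, hmax⟩ :=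
    Measure.exists_mem_of_measure_ne_zero_of_ae hatom.ne' (ae_restrict_of_ae hP.ae_isMaxOn)
  rw [show r x = d from hxd] at hx hmax
  exact (hP.isAuction x).tie_eq_one_of_isMaxOn hmax hx.2 hP.le_max hb hbd hgap hpos

end IsItemBestResponse

theorem measure_preimage_Iic_eq_one_of_gap {P : Measure β} {Q : Measure α}
    [IsProbabilityMeasure P] [IsProbabilityMeasure Q] {sP : β → ℝ} {sQ : α → ℝ}
    {τP τQ : ℝ → ℝ} {gP : β → α → ℝ} {gQ : α → β → ℝ} {VP VQ H b c : ℝ}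
    (hP : IsItemBestResponse P sP Q sQ τP gP VP H) (hQ : IsItemBestResponse Q sQ P sP τQ gQ VQ H)
    (hτ : ∀ x, τP x + τQ x = 1) (hb : 0 ≤ b) (hbc : b < c)
    (hgap : P (sP ⁻¹' Iic b) = P (sP ⁻¹' Iic c)) (hP0 : 0 < P (sP ⁻¹' Iic b))
    (hQ0 : 0 < Q (sQ ⁻¹' Iic b)) :
    P (sP ⁻¹' Iic b) = 1 ∧ Q (sQ ⁻¹' Iic b) = 1 := by
  have hPb : P (sP ⁻¹' Iic b) = 1 := by
    by_contra hne
    obtain ⟨x, -⟩ := hQ.ae_isMaxOn.exists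
    have hsP := (hQ.isAuction x).measurable_bid
    obtain ⟨d, hcd, hgapP, hnear⟩ :=
      exists_measure_Ioo_eq_zero_of_Iic_eq (P.map sP) (b := b) (c := c)
      (by rwa [Measure.map_apply hsP measurableSet_Iic, Measure.map_apply hsP measurableSet_Iic])
      (by rw [Measure.map_apply hsP measurableSet_Iic, Measure.map_apply hsP MeasurableSet.univ,
          preimage_univ, measure_univ]; exact prob_le_one.lt_of_ne hne)
    rw [Measure.map_apply hsP measurableSet_Ioo] at hgapP
    have hnear' : ∀ x > d, 0 < P (sP ⁻¹' Icc d x) := fun x hx => by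
      simpa only [Measure.map_apply hsP measurableSet_Icc] using hnear x hx
    have hbd : b < d := hbc.trans_le hcd
    have hgapQ := hQ.measure_preimage_Ioo_eq_zero hb hgapP hP0
    have hatomQ := hP.measure_preimage_singleton_pos hb hbd hgapQ hQ0 hnear'
    obtain ⟨hτQ, hatomP⟩ := hQ.tie_eq_one hb hbd hgapP hP0 hatomQ
    obtain ⟨hτP, -⟩ := hP.tie_eq_one hb hbd hgapQ hQ0 hatomP
    linarith [hτ d]
  exact ⟨hPb, hQ.measure_preimage_Iic_eq_one hb hPb⟩

end General

section AndOrGame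

variable {v : ℝ} {T : TieRule} {μ ν : Measure Bid}

lemma measurableSet_box (v : ℝ) : MeasurableSet (box v) :=
  measurableSet_Icc.prod measurableSet_Icc

lemma IsMixed.ae_mem_box (h : IsMixed v μ) : ∀ᵐ a ∂μ, a ∈ box v := by
  have := h.1
  exact (ae_iff_measure_eq (p := (· ∈ box v)) (measurableSet_box v).nullMeasurableSet).2
    (h.2.trans measure_univ.symm)

lemma q1_mem_Icc (T : TieRule) (a b : Bid) : q1 T a b ∈ Icc 0 1 :=
  winProb_mem_Icc ⟨T.t1_nonneg _, T.t1_le_one _⟩ _ _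

lemma q2_mem_Icc (T : TieRule) (a b : Bid) : q2 T a b ∈ Icc 0 1 :=
  winProb_mem_Icc ⟨T.t2_nonneg _, T.t2_le_one _⟩ _ _

lemma measurable_q1 (T : TieRule) : Measurable fun z : Bid × Bid => q1 T z.1 z.2 :=
  Measurable.ite (measurableSet_lt (by fun_prop) (by fun_prop)) measurable_const
    (Measurable.ite (measurableSet_eq_fun (by fun_prop) (by fun_prop))
      (T.meas1.comp (by fun_prop)) measurable_const)

lemma measurable_q2 (T : TieRule) : Measurable fun z : Bid × Bid => q2 T z.1 z.2 :=
  Measurable.ite (measurableSet_lt (by fun_prop) (by fun_prop)) measurable_const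
    (Measurable.ite (measurableSet_eq_fun (by fun_prop) (by fun_prop))
      (T.meas2.comp (by fun_prop)) measurable_const)

lemma measurable_uAnd (T : TieRule) : Measurable fun z : Bid × Bid => uAnd T z.1 z.2 :=
  have := measurable_q1 T
  have := measurable_q2 T
  by unfold uAnd; fun_prop

lemma measurable_uOr (v : ℝ) (T : TieRule) : Measurable fun z : Bid × Bid => uOr v T z.1 z.2 :=
  have := measurable_q1 T
  have := measurable_q2 T
  by unfold uOr; fun_prop

lemma abs_uAnd_le {a : Bid} (ha : a ∈ box v) (p : Bid) : |uAnd T a p| ≤ 1 + 2 * Hval v := by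
  obtain ⟨⟨ha₁, ha₁'⟩, ha₂, ha₂'⟩ := ha
  obtain ⟨h₁, h₁'⟩ := q1_mem_Icc T a p
  obtain ⟨h₂, h₂'⟩ := q2_mem_Icc T a p
  rw [abs_le]
  constructor <;> simp only [uAnd] <;> nlinarith

lemma abs_uOr_le {q : Bid} (hq : q ∈ box v) (a : Bid) : |uOr v T a q| ≤ |v| + 2 * Hval v := by
  obtain ⟨⟨hq₁, hq₁'⟩, hq₂, hq₂'⟩ := hq
  obtain ⟨h₁, h₁'⟩ := q1_mem_Icc T a q
  obtain ⟨h₂, h₂'⟩ := q2_mem_Icc T a q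
  have hw : |v * (1 - q1 T a q * q2 T a q)| ≤ |v| := by
    rw [abs_mul]
    exact mul_le_of_le_one_right (abs_nonneg v) (abs_le.2 ⟨by nlinarith, by nlinarith⟩)
  rw [abs_le] at hw ⊢
  constructor <;> simp only [uOr] <;> nlinarith

lemma IsNash.integrable_uAnd (h : IsNash v T μ ν) :
    Integrable (fun z : Bid × Bid => uAnd T z.1 z.2) (μ.prod ν) := by
  have := h.1.1; have := h.2.1.1
  refine .of_bound (measurable_uAnd T).aestronglyMeasurable (1 + 2 * Hval v) ?_
  filter_upwards [Measure.quasiMeasurePreserving_fst.ae h.1.ae_mem_box] with z hz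
  exact abs_uAnd_le hz z.2

lemma IsNash.integrable_uOr (h : IsNash v T μ ν) :
    Integrable (fun z : Bid × Bid => uOr v T z.1 z.2) (μ.prod ν) := by
  have := h.1.1; have := h.2.1.1
  refine .of_bound (measurable_uOr v T).aestronglyMeasurable (|v| + 2 * Hval v) ?_
  filter_upwards [Measure.quasiMeasurePreserving_snd.ae h.2.1.ae_mem_box] with z hz
  exact abs_uOr_le hz z.1

lemma IsNash.ae_isMaxOn_and (h : IsNash v T μ ν) :
    ∀ᵐ a ∂μ, a ∈ box v ∧ IsMaxOn (fun a => ∫ p, uAnd T a p ∂ν) (box v) a := by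
  have := h.1.1; have := h.2.1.1
  refine ae_isMaxOn_of_forall_le_integral h.integrable_uAnd.integral_prod_left h.1.ae_mem_box
    fun a ha => ?_
  rw [← integral_prod _ h.integrable_uAnd]
  exact h.2.2.1 a ha

lemma IsNash.ae_isMaxOn_or (h : IsNash v T μ ν) :
    ∀ᵐ q ∂ν, q ∈ box v ∧ IsMaxOn (fun q => ∫ a, uOr v T a q ∂μ) (box v) q := by
  have := h.1.1; have := h.2.1.1
  refine ae_isMaxOn_of_forall_le_integral h.integrable_uOr.integral_prod_right h.2.1.ae_mem_box
    fun q hq => ?_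
  rw [← integral_prod_symm _ h.integrable_uOr]
  exact h.2.2.2 q hq

lemma uAnd_fst_eq (T : TieRule) (a p : Bid) (y : ℝ) :
    uAnd T (y, a.2) p = winProb (T.t1 y) y p.1 * (q2 T a p - y) + -a.2 * q2 T a p := by
  change winProb (T.t1 y) y p.1 * q2 T a p - y * winProb (T.t1 y) y p.1 - a.2 * q2 T a p = _
  ring

lemma uAnd_snd_eq (T : TieRule) (a p : Bid) (y : ℝ) :
    uAnd T (a.1, y) p = winProb (T.t2 y) y p.2 * (q1 T a p - y) + -a.1 * q1 T a p := by
  change q1 T a p * winProb (T.t2 y) y p.2 - a.1 * q1 T a p - y * winProb (T.t2 y) y p.2 = _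
  ring

lemma uOr_fst_eq (v : ℝ) (T : TieRule) (a q : Bid) (y : ℝ) :
    uOr v T a (y, q.2)
      = winProb (1 - T.t1 y) y a.1 * (v * q2 T a q - y) + (v - q.2) * (1 - q2 T a q) := by
  rw [← one_sub_winProb T.t1]
  change v * (1 - winProb (T.t1 a.1) a.1 y * q2 T a q) - y * (1 - winProb (T.t1 a.1) a.1 y)
    - q.2 * (1 - q2 T a q) = _
  ring

lemma uOr_snd_eq (v : ℝ) (T : TieRule) (a q : Bid) (y : ℝ) :
    uOr v T a (q.1, y)
      = winProb (1 - T.t2 y) y a.2 * (v * q1 T a q - y) + (v - q.1) * (1 - q1 T a q) := by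
  rw [← one_sub_winProb T.t2]
  change v * (1 - q1 T a q * winProb (T.t2 a.2) a.2 y) - q.1 * (1 - q1 T a q)
    - y * (1 - winProb (T.t2 a.2) a.2 y) = _
  ring

lemma isAuction_and_fst (T : TieRule) (a : Bid) :
    IsAuction Prod.fst T.t1 (fun p => q2 T a p) 1 :=
  ⟨measurable_fst, (measurable_winProb _ _).comp measurable_snd, q2_mem_Icc T a,
    fun y => ⟨T.t1_nonneg y, T.t1_le_one y⟩⟩

lemma isAuction_and_snd (T : TieRule) (a : Bid) :
    IsAuction Prod.snd T.t2 (fun p => q1 T a p) 1 :=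
  ⟨measurable_snd, (measurable_winProb _ _).comp measurable_fst, q1_mem_Icc T a,
    fun y => ⟨T.t2_nonneg y, T.t2_le_one y⟩⟩

lemma isAuction_or_fst (hv : 0 ≤ v) (T : TieRule) (q : Bid) :
    IsAuction Prod.fst (fun y => 1 - T.t1 y) (fun a => v * q2 T a q) v :=
  ⟨measurable_fst, ((measurable_q2 T).comp (measurable_id.prodMk measurable_const)).const_mul v,
    fun a => ⟨mul_nonneg hv (q2_mem_Icc T a q).1, mul_le_of_le_one_right hv (q2_mem_Icc T a q).2⟩,
    fun y => ⟨sub_nonneg.2 (T.t1_le_one y), sub_le_self _ (T.t1_nonneg y)⟩⟩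

lemma isAuction_or_snd (hv : 0 ≤ v) (T : TieRule) (q : Bid) :
    IsAuction Prod.snd (fun y => 1 - T.t2 y) (fun a => v * q1 T a q) v :=
  ⟨measurable_snd, ((measurable_q1 T).comp (measurable_id.prodMk measurable_const)).const_mul v,
    fun a => ⟨mul_nonneg hv (q1_mem_Icc T a q).1, mul_le_of_le_one_right hv (q1_mem_Icc T a q).2⟩,
    fun y => ⟨sub_nonneg.2 (T.t2_le_one y), sub_le_self _ (T.t2_nonneg y)⟩⟩

lemma IsNash.isItemBestResponse_and_fst (h : IsNash v T μ ν) :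
    IsItemBestResponse μ Prod.fst ν Prod.fst T.t1 (fun a p => q2 T a p) 1 (Hval v) := by
  have := h.2.1.1
  refine ⟨isAuction_and_fst T, le_max_left 1 v, ?_⟩
  filter_upwards [h.ae_isMaxOn_and] with a ⟨⟨ha₁, ha₂⟩, hmax⟩
  exact ⟨ha₁, hmax.of_comp_eq_add (e := fun y => (y, a.2)) (fun y hy => ⟨hy, ha₂⟩) rfl
    fun y => (isAuction_and_fst T a).integral_eq_auctionPayoff_add (uAnd_fst_eq T a · y)
      ((isAuction_and_fst T a).integrable_value.const_mul _)⟩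

lemma IsNash.isItemBestResponse_and_snd (h : IsNash v T μ ν) :
    IsItemBestResponse μ Prod.snd ν Prod.snd T.t2 (fun a p => q1 T a p) 1 (Hval v) := by
  have := h.2.1.1
  refine ⟨isAuction_and_snd T, le_max_left 1 v, ?_⟩
  filter_upwards [h.ae_isMaxOn_and] with a ⟨⟨ha₁, ha₂⟩, hmax⟩
  exact ⟨ha₂, hmax.of_comp_eq_add (e := fun y => (a.1, y)) (fun y hy => ⟨ha₁, hy⟩) rfl
    fun y => (isAuction_and_snd T a).integral_eq_auctionPayoff_add (uAnd_snd_eq T a · y)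
      ((isAuction_and_snd T a).integrable_value.const_mul _)⟩

lemma IsNash.isItemBestResponse_or_fst (h : IsNash v T μ ν) (hv : 0 ≤ v) :
    IsItemBestResponse ν Prod.fst μ Prod.fst (fun y => 1 - T.t1 y) (fun q a => v * q2 T a q) v
      (Hval v) := by
  have := h.1.1
  refine ⟨isAuction_or_fst hv T, le_max_right 1 v, ?_⟩
  filter_upwards [h.ae_isMaxOn_or] with q ⟨⟨hq₁, hq₂⟩, hmax⟩
  have hint : Integrable (fun a => q2 T a q) μ :=
    integrable_of_mem_Icc ((measurable_q2 T).comp (measurable_id.prodMk measurable_const))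
      (q2_mem_Icc T · q)
  exact ⟨hq₁, hmax.of_comp_eq_add (e := fun y => (y, q.2)) (fun y hy => ⟨hy, hq₂⟩) rfl
    fun y => (isAuction_or_fst hv T q).integral_eq_auctionPayoff_add (uOr_fst_eq v T · q y)
      (((integrable_const 1).sub hint).const_mul _)⟩

lemma IsNash.isItemBestResponse_or_snd (h : IsNash v T μ ν) (hv : 0 ≤ v) :
    IsItemBestResponse ν Prod.snd μ Prod.snd (fun y => 1 - T.t2 y) (fun q a => v * q1 T a q) v
      (Hval v) := by
  have := h.1.1
  refine ⟨isAuction_or_snd hv T, le_max_right 1 v, ?_⟩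
  filter_upwards [h.ae_isMaxOn_or] with q ⟨⟨hq₁, hq₂⟩, hmax⟩
  have hint : Integrable (fun a => q1 T a q) μ :=
    integrable_of_mem_Icc ((measurable_q1 T).comp (measurable_id.prodMk measurable_const))
      (q1_mem_Icc T · q)
  exact ⟨hq₂, hmax.of_comp_eq_add (e := fun y => (q.1, y)) (fun y hy => ⟨hq₁, hy⟩) rfl
    fun y => (isAuction_or_snd hv T q).integral_eq_auctionPayoff_add (uOr_snd_eq v T · q y)
      (((integrable_const 1).sub hint).const_mul _)⟩

end AndOrGame

/-- In any mixed Nash equilibrium `(μ,ν)` with `v > 1/2`: if `0 < b < c`,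
one player never bids in `(b,c]` on an item, and both players bid at most `b` on that
item with positive probability, then both players always bid at most `b` on that item.
All four variants (each player, each item) are stated. -/
theorem support_interval (v : ℝ) (hv : 1/2 < v) (T : TieRule)
    (μ ν : Measure Bid) (h : IsNash v T μ ν)
    (b c : ℝ) (hb : 0 < b) (hbc : b < c) :
    ((ν {p : Bid | p.1 ≤ b} = ν {p : Bid | p.1 ≤ c} ∧
        0 < ν {p : Bid | p.1 ≤ b} ∧ 0 < μ {p : Bid | p.1 ≤ b}) →
      (ν {p : Bid | p.1 ≤ b} = 1 ∧ μ {p : Bid | p.1 ≤ b} = 1)) ∧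
    ((μ {p : Bid | p.1 ≤ b} = μ {p : Bid | p.1 ≤ c} ∧
        0 < μ {p : Bid | p.1 ≤ b} ∧ 0 < ν {p : Bid | p.1 ≤ b}) →
      (μ {p : Bid | p.1 ≤ b} = 1 ∧ ν {p : Bid | p.1 ≤ b} = 1)) ∧
    ((ν {p : Bid | p.2 ≤ b} = ν {p : Bid | p.2 ≤ c} ∧
        0 < ν {p : Bid | p.2 ≤ b} ∧ 0 < μ {p : Bid | p.2 ≤ b}) →
      (ν {p : Bid | p.2 ≤ b} = 1 ∧ μ {p : Bid | p.2 ≤ b} = 1)) ∧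
    ((μ {p : Bid | p.2 ≤ b} = μ {p : Bid | p.2 ≤ c} ∧
        0 < μ {p : Bid | p.2 ≤ b} ∧ 0 < ν {p : Bid | p.2 ≤ b}) →
      (μ {p : Bid | p.2 ≤ b} = 1 ∧ ν {p : Bid | p.2 ≤ b} = 1)) := by
  have := h.1.1
  have := h.2.1.1
  have hv₀ : 0 ≤ v := by linarith
  refine ⟨?_, ?_, ?_, ?_⟩ <;> rintro ⟨hgap, hpos, hpos'⟩
  · exact measure_preimage_Iic_eq_one_of_gap (h.isItemBestResponse_or_fst hv₀)
      h.isItemBestResponse_and_fst (fun x => sub_add_cancel 1 (T.t1 x)) hb.le hbc hgap hpos hpos'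
  · exact measure_preimage_Iic_eq_one_of_gap h.isItemBestResponse_and_fst
      (h.isItemBestResponse_or_fst hv₀) (fun x => add_sub_cancel (T.t1 x) 1) hb.le hbc hgap hpos
      hpos'
  · exact measure_preimage_Iic_eq_one_of_gap (h.isItemBestResponse_or_snd hv₀)
      h.isItemBestResponse_and_snd (fun x => sub_add_cancel 1 (T.t2 x)) hb.le hbc hgap hpos hpos'
  · exact measure_preimage_Iic_eq_one_of_gap h.isItemBestResponse_and_snd
      (h.isItemBestResponse_or_snd hv₀) (fun x => add_sub_cancel (T.t2 x) 1) hb.le hbc hgap hpos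
      hpos'
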